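/- Let x = (3 − √5)/4. For a function f : [0,1]² → [0,1] define L_A(f) = (1/2)·[ ((1−2x)/(1−x))·(f(x,0) − 0)² + (x/(1−x))·(f(x,1−x) − (1−x))² ] + (1/2)·[ (x/(1−x))·(f(1−x,x) − x)² + ((1−2x)/(1−x))·(f(1−x,1) − 1)² ], and let L_B(f) be the same expression with the two arguments of f interchanged in every occurrence, i.e., L_B(f) = (1/2)·[ ((1−2x)/(1−x))·(f(0,x))² + (x/(1−x))·(f(1−x,x) − (1−x))² ] + (1/2)·[ (x/(1−x))·(f(x,1−x) − x)² + ((1−2x)/(1−x))·(f(1,1−x) − 1)² ]. Then for every f : [0,1]² → [0,1], (1/2)·L_A(f) + (1/2)·L_B(f) ≥ (5√5 − 11)/8. -/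

import Mathlib

/-!
Mixing the two structures, the four forecasts at the fully informative reports can be made exact,
so only the two forecasts `f x (1 - x)` and `f (1 - x) x` cost anything. Each of them is charged
against the targets `x` and `1 - x` in the two structures with weight `x / (1 - x)`, so it costs at
least `(x / (1 - x)) (1 - 2x)² / 8`. The parameter `x = (3 - √5)/4` maximises
`x (1 - 2x)² / (1 - x)`, where this bound equals `(5√5 - 11)/8`.
-/

noncomputable section

/-- The optimal adversarial parameter `x = (3 - √5)/4`. -/
def xopt : ℝ := (3 - Real.sqrt 5) / 4

/-- Relative loss of the aggregation scheme `f` on the Blackwell-ordered structure where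
the less-informed expert is listed first. -/
def LA (f : ℝ → ℝ → ℝ) : ℝ :=
  (1/2) * (((1 - 2*xopt)/(1 - xopt)) * (f xopt 0 - 0)^2
      + (xopt/(1 - xopt)) * (f xopt (1 - xopt) - (1 - xopt))^2)
  + (1/2) * ((xopt/(1 - xopt)) * (f (1 - xopt) xopt - xopt)^2
      + ((1 - 2*xopt)/(1 - xopt)) * (f (1 - xopt) 1 - 1)^2)

/-- Relative loss of `f` on the same structure with the two experts' roles swapped. -/
def LB (f : ℝ → ℝ → ℝ) : ℝ :=
  (1/2) * (((1 - 2*xopt)/(1 - xopt)) * (f 0 xopt)^2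
      + (xopt/(1 - xopt)) * (f (1 - xopt) xopt - (1 - xopt))^2)
  + (1/2) * ((xopt/(1 - xopt)) * (f xopt (1 - xopt) - xopt)^2
      + ((1 - 2*xopt)/(1 - xopt)) * (f 1 (1 - xopt) - 1)^2)

open Real

theorem half_sq_sub_le_sq_sub_add_sq_sub (u a b : ℝ) :
    (a - b) ^ 2 / 2 ≤ (u - a) ^ 2 + (u - b) ^ 2 := by
  nlinarith [sq_nonneg (2 * u - a - b)]

theorem sqrt_five_bounds : 2 < √5 ∧ √5 < 3 := by
  have h5 : √5 ^ 2 = 5 := sq_sqrt (by norm_num)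
  have h0 : 0 ≤ √5 := sqrt_nonneg 5
  constructor <;> nlinarith

theorem xopt_nonneg : 0 ≤ xopt := by
  unfold xopt; linarith [sqrt_five_bounds.2]

theorem xopt_lt_half : xopt < 1 / 2 := by
  unfold xopt; linarith [sqrt_five_bounds.1]

theorem le_half_LA_add_half_LB (f : ℝ → ℝ → ℝ) :
    xopt / (1 - xopt) * (1 - 2 * xopt) ^ 2 / 4 ≤ (1/2) * LA f + (1/2) * LB f := by
  set p := (1 - 2 * xopt) / (1 - xopt)
  set q := xopt / (1 - xopt)
  set u := f xopt (1 - xopt)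
  set v := f (1 - xopt) xopt
  have hp : 0 ≤ p := div_nonneg (by linarith [xopt_lt_half]) (by linarith [xopt_lt_half])
  have hq : 0 ≤ q := div_nonneg xopt_nonneg (by linarith [xopt_lt_half])
  have hsplit : (1/2) * LA f + (1/2) * LB f
      = p / 4 * (f xopt 0 ^ 2 + (f (1 - xopt) 1 - 1) ^ 2 + f 0 xopt ^ 2
          + (f 1 (1 - xopt) - 1) ^ 2)
        + q / 4 * (((u - (1 - xopt)) ^ 2 + (u - xopt) ^ 2)
          + ((v - (1 - xopt)) ^ 2 + (v - xopt) ^ 2)) := by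
    unfold LA LB; ring
  have hu := half_sq_sub_le_sq_sub_add_sq_sub u (1 - xopt) xopt
  have hv := half_sq_sub_le_sq_sub_add_sq_sub v (1 - xopt) xopt
  have hexact : 0 ≤ p / 4 * (f xopt 0 ^ 2 + (f (1 - xopt) 1 - 1) ^ 2 + f 0 xopt ^ 2
      + (f 1 (1 - xopt) - 1) ^ 2) := by positivity
  have hmixed := mul_le_mul_of_nonneg_left (add_le_add hu hv) (div_nonneg hq zero_le_four)
  rw [hsplit]
  linarith

theorem xopt_loss_bound_eq : xopt / (1 - xopt) * (1 - 2 * xopt) ^ 2 / 4 = (5 * √5 - 11) / 8 := by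
  have h5 : √5 ^ 2 = 5 := sq_sqrt (by norm_num)
  have hne : 1 - xopt ≠ 0 := by linarith [xopt_lt_half]
  rw [div_mul_eq_mul_div, div_div, div_eq_div_iff (mul_ne_zero hne four_ne_zero) (by norm_num)]
  unfold xopt
  nlinarith

theorem stmt_3_general (f : ℝ → ℝ → ℝ) :
    (1/2) * LA f + (1/2) * LB f ≥ (5 * Real.sqrt 5 - 11) / 8 :=
  xopt_loss_bound_eq ▸ le_half_LA_add_half_LB f

theorem stmt_3 (f : ℝ → ℝ → ℝ)
    (hf : ∀ a b : ℝ, a ∈ Set.Icc (0:ℝ) 1 → b ∈ Set.Icc (0:ℝ) 1 → f a b ∈ Set.Icc (0:ℝ) 1) :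
    (1/2) * LA f + (1/2) * LB f ≥ (5 * Real.sqrt 5 - 11) / 8 :=
  stmt_3_general f
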